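/- The circular altitude of a finite simple graph equals the maximum of the circular altitudes of its blocks. -/

import Mathlib

open SimpleGraph

/-- A monotonic cycle with respect to an ordering relation `lt`:
a nonempty list of distinct vertices, strictly increasing w.r.t. `lt`,
and if it has length at least 2, consecutive vertices are adjacent and
the last vertex is adjacent to the first. -/
def MonoCycle {V : Type*} (G : SimpleGraph V) (lt : V → V → Prop) (l : List V) : Prop :=
  l ≠ [] ∧ l.Nodup ∧ l.Chain' lt ∧
    (2 ≤ l.length → l.Chain' G.Adj ∧
      ∀ a b, l.head? = some a → l.getLast? = some b → G.Adj b a)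

/-- The maximum length of a monotonic cycle for the ordering relation `lt`. -/
noncomputable def maxCycleLen {V : Type*} (G : SimpleGraph V) (lt : V → V → Prop) : ℕ :=
  sSup {m | ∃ l : List V, MonoCycle G lt l ∧ l.length = m}

/-- The circular altitude of a graph: the minimum over all linear orderings
(injections of the vertex set into `ℕ`) of the maximum length of a monotonic cycle. -/
noncomputable def circAlt {V : Type*} (G : SimpleGraph V) : ℕ :=
  sInf {n | ∃ f : V → ℕ, Function.Injective f ∧
    maxCycleLen G (fun a b => f a < f b) = n}

/-- `x` is a cut-vertex of `G`: deleting `x` increases the number of connected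
components, i.e. some two vertices distinct from `x` are reachable in `G` but
not in `G - x`. -/
def IsCutVertex {V : Type*} (G : SimpleGraph V) (x : V) : Prop :=
  ∃ a b : ({y | y ≠ x} : Set V), G.Reachable a.1 b.1 ∧
    ¬ (G.induce {y | y ≠ x}).Reachable a b

/-- A graph is nonseparable if it is connected and has no cut-vertex. -/
def Nonseparable {V : Type*} (G : SimpleGraph V) : Prop :=
  G.Connected ∧ ∀ x : V, ¬ IsCutVertex G x

/-- A block of `G` is a maximal nonseparable subgraph of `G`. -/
def IsBlock {V : Type*} {G : SimpleGraph V} (B : G.Subgraph) : Prop :=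
  Nonseparable B.coe ∧ ∀ B' : G.Subgraph, B ≤ B' → Nonseparable B'.coe → B = B'

/-!
A monotonic cycle with at least two vertices is an edge or a cycle of `G`, so it cannot cross a
separation: a pair of vertex sets `s`, `t` covering `V`, meeting in at most one vertex, with every
edge inside `s` or inside `t`. A graph that is not nonseparable has a proper separation (a
component against the rest, or a cut vertex `x` together with one component of `G - x` against
the rest). Since the two sides share at most one vertex, orderings of them glue to an ordering of
`V` restricting to both; by induction on the number of vertices, `G` therefore has an ordering in
which every monotonic cycle of length at least two is no longer than the circular altitude of a
nonseparable subgraph, hence of a block. Conversely, circular altitude is monotone under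
subgraphs.
-/

section

open Function

variable {V W : Type*} {G G' : SimpleGraph V} {A : SimpleGraph W} {lt lt' : V → V → Prop}
  {l : List V}

theorem MonoCycle.mono (hG : G ≤ G') (hlt : ∀ a b, lt a b → lt' a b) (hl : MonoCycle G lt l) :
    MonoCycle G' lt' l := by
  obtain ⟨hne, hnd, hmono, hcyc⟩ := hl
  refine ⟨hne, hnd, List.IsChain.imp hlt hmono, fun h => ?_⟩
  obtain ⟨hchain, hwrap⟩ := hcyc h
  exact ⟨List.IsChain.imp (fun _ _ hab => hG hab) hchain, fun a b ha hb => hG (hwrap a b ha hb)⟩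

theorem monoCycle_map_iff {φ : W → V} (hφ : Injective φ) {l : List W} :
    MonoCycle G lt (l.map φ) ↔ MonoCycle (G.comap φ) (fun a b => lt (φ a) (φ b)) l := by
  have hadj : (G.comap φ).Adj = fun a b => G.Adj (φ a) (φ b) := rfl
  simp only [MonoCycle, List.Chain', List.isChain_map, ne_eq, List.map_eq_nil_iff,
    List.nodup_map_iff hφ, List.length_map, List.head?_map, List.getLast?_map,
    Option.map_eq_some_iff, hadj]
  refine and_congr_right fun _ => and_congr_right fun _ => and_congr_right fun _ =>
    imp_congr_right fun _ => and_congr_right fun _ => ⟨fun h a b ha hb => ?_, ?_⟩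
  · exact h _ _ ⟨a, ha, rfl⟩ ⟨b, hb, rfl⟩
  · rintro h _ _ ⟨a, ha, rfl⟩ ⟨b, hb, rfl⟩
    exact h a b ha hb

theorem MonoCycle.isChain_adj (hl : MonoCycle G lt l) : l.IsChain G.Adj := by
  match l, hl with
  | [], _ => exact List.IsChain.nil
  | [_], _ => exact List.IsChain.singleton _
  | _ :: _ :: _, hl => exact (hl.2.2.2 (by simp)).1

theorem MonoCycle.isChain_rotate {l₁ l₂ : List V} {x : V} (hl : MonoCycle G lt (l₁ ++ x :: l₂)) :
    (l₂ ++ l₁).IsChain G.Adj := by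
  have hchain := List.isChain_append.1 hl.isChain_adj
  refine List.isChain_append.2 ⟨hchain.2.1.tail, hchain.1, fun b hb a ha => ?_⟩
  have hlen : 2 ≤ (l₁ ++ x :: l₂).length := by
    cases l₁ with
    | nil => simp at ha
    | cons => simp; omega
  rw [Option.mem_def] at ha hb
  refine (hl.2.2.2 hlen).2 a b ?_ ?_
  · rw [List.head?_append, ha]; rfl
  · rw [List.getLast?_append_cons, List.getLast?_cons, hb]; rfl

theorem le_maxCycleLen [Finite V] (hl : MonoCycle G lt l) : l.length ≤ maxCycleLen G lt := by
  have := Fintype.ofFinite V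
  refine le_csSup ⟨Fintype.card V, ?_⟩ ⟨l, hl, rfl⟩
  rintro _ ⟨l', hl', rfl⟩
  exact hl'.2.1.length_le_card

theorem circAlt_le {f : V → ℕ} (hf : Injective f) :
    circAlt G ≤ maxCycleLen G (fun a b => f a < f b) :=
  Nat.sInf_le ⟨f, hf, rfl⟩

theorem exists_maxCycleLen_eq_circAlt [Countable V] (G : SimpleGraph V) :
    ∃ f : V → ℕ, Injective f ∧ maxCycleLen G (fun a b => f a < f b) = circAlt G := by
  obtain ⟨f, hf⟩ := Countable.exists_injective_nat V
  exact Nat.sInf_mem (s := {n | ∃ f : V → ℕ, Injective f ∧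
    maxCycleLen G (fun a b => f a < f b) = n}) ⟨_, f, hf, rfl⟩

theorem one_le_circAlt [Finite V] [Nonempty V] : 1 ≤ circAlt G := by
  obtain ⟨f, -, hf⟩ := exists_maxCycleLen_eq_circAlt G
  have hsingle : MonoCycle G (fun a b => f a < f b) [Classical.arbitrary V] :=
    ⟨List.cons_ne_nil _ _, List.nodup_singleton _, List.IsChain.singleton _, by simp⟩
  exact hf ▸ le_maxCycleLen hsingle

theorem circAlt_le_of_copy [Finite V] (φ : Copy A G) : circAlt A ≤ circAlt G := by
  obtain ⟨f, hf, hfG⟩ := exists_maxCycleLen_eq_circAlt G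
  calc circAlt A ≤ maxCycleLen A (fun a b => f (φ a) < f (φ b)) := circAlt_le (hf.comp φ.injective)
    _ ≤ maxCycleLen G (fun a b => f a < f b) := by
      refine csSup_le' ?_
      rintro _ ⟨l, hl, rfl⟩
      have hAG : A ≤ G.comap φ := fun _ _ hab => φ.toHom.map_adj hab
      simpa using le_maxCycleLen ((monoCycle_map_iff φ.injective).2 (hl.mono hAG fun _ _ => id))
    _ = circAlt G := hfG

theorem circAlt_congr [Finite V] [Finite W] (e : A ≃g G) : circAlt A = circAlt G :=
  (circAlt_le_of_copy e.toCopy).antisymm (circAlt_le_of_copy e.symm.toCopy)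

theorem IsCutVertex.of_iso (e : A ≃g G) {x : V} (h : IsCutVertex G x) :
    IsCutVertex A (e.symm x) := by
  obtain ⟨a, b, hab, hnab⟩ := h
  have hbij : Set.BijOn e.symm {y | y ≠ x} {y | y ≠ e.symm x} :=
    ⟨fun _ hy => e.symm.injective.ne hy, e.symm.injective.injOn,
      fun z hz => ⟨e z, fun h => hz (by simp [← h]), by simp⟩⟩
  let φ := e.symm.induce hbij
  refine ⟨φ a, φ b, Iso.reachable_iff.2 hab, fun h => hnab ?_⟩
  exact Iso.reachable_iff.1 h

theorem Nonseparable.of_iso (e : A ≃g G) (hA : Nonseparable A) : Nonseparable G :=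
  ⟨e.connected_iff.1 hA.1, fun _ hx => hA.2 _ (hx.of_iso e)⟩

theorem nonseparable_singletonSubgraph (v : V) : Nonseparable (G.singletonSubgraph v).coe := by
  refine ⟨Subgraph.singletonSubgraph_connected.coe, ?_⟩
  rintro x ⟨a, -, -, -⟩
  exact a.2 (Subtype.ext (a.1.2.trans x.2.symm))

theorem exists_nonseparable_subgraph_of_copy [Finite V] (φ : Copy A G) (hA : Nonseparable A) :
    ∃ B : G.Subgraph, Nonseparable B.coe ∧ circAlt B.coe = circAlt A := by
  have : Finite W := Finite.of_injective φ φ.injective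
  exact ⟨φ.toSubgraph, hA.of_iso φ.isoToSubgraph, (circAlt_congr φ.isoToSubgraph).symm⟩

theorem exists_isBlock_circAlt_ge [Finite V] {B : G.Subgraph} (hB : Nonseparable B.coe) :
    ∃ B' : G.Subgraph, IsBlock B' ∧ circAlt B.coe ≤ circAlt B'.coe := by
  obtain ⟨B', ⟨hBB', hB'⟩, hmax⟩ := Set.Finite.exists_maximalFor id
    {C : G.Subgraph | B ≤ C ∧ Nonseparable C.coe} (Set.toFinite _) ⟨B, le_rfl, hB⟩
  refine ⟨B', ⟨hB', fun C hle hC => le_antisymm hle (hmax ⟨hBB'.trans hle, hC⟩ hle)⟩, ?_⟩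
  exact circAlt_le_of_copy ((Subgraph.inclusion hBB').toCopy (Subgraph.inclusion.injective hBB'))

section Separation

variable {s t : Set V}

structure IsSeparation (G : SimpleGraph V) (s t : Set V) : Prop where
  union_eq_univ : s ∪ t = Set.univ
  inter_subsingleton : (s ∩ t).Subsingleton
  adj : ∀ ⦃a b⦄, G.Adj a b → a ∈ s ∧ b ∈ s ∨ a ∈ t ∧ b ∈ t

namespace IsSeparation

theorem symm (h : IsSeparation G s t) : IsSeparation G t s :=
  ⟨Set.union_comm s t ▸ h.union_eq_univ, Set.inter_comm s t ▸ h.inter_subsingleton,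
    fun _ _ hab => (h.adj hab).symm⟩

theorem mem_right_of_notMem_left (h : IsSeparation G s t) {a : V} (ha : a ∉ s) : a ∈ t :=
  (Set.eq_univ_iff_forall.1 h.union_eq_univ a).resolve_left ha

theorem isChain_subset_of_head_mem (h : IsSeparation G s t) {a : V} {l : List V}
    (hl : (a :: l).IsChain G.Adj) (hI : ∀ v ∈ a :: l, v ∉ s ∩ t) (ha : a ∈ s) :
    ∀ v ∈ a :: l, v ∈ s := by
  refine (List.IsChain.iff_mem.1 hl).induction _ _ (fun x y ⟨hx, _, hxy⟩ hxs => ?_) fun _ => ha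
  rcases h.adj hxy with ⟨-, hys⟩ | ⟨hxt, -⟩
  · exact hys
  · exact absurd ⟨hxs, hxt⟩ (hI x hx)

theorem isChain_subset (h : IsSeparation G s t) {l : List V} (hl : l.IsChain G.Adj)
    (hI : ∀ v ∈ l, v ∉ s ∩ t) : (∀ v ∈ l, v ∈ s) ∨ (∀ v ∈ l, v ∈ t) := by
  match l with
  | [] => simp
  | a :: l =>
    by_cases ha : a ∈ s
    · exact Or.inl (h.isChain_subset_of_head_mem hl hI ha)
    · refine Or.inr (h.symm.isChain_subset_of_head_mem hl ?_ (h.mem_right_of_notMem_left ha))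
      simpa only [Set.inter_comm] using hI

theorem monoCycle_subset (h : IsSeparation G s t) (hl : MonoCycle G lt l) :
    (∀ v ∈ l, v ∈ s) ∨ (∀ v ∈ l, v ∈ t) := by
  by_cases hx : ∃ x ∈ l, x ∈ s ∩ t
  · obtain ⟨x, hxl, hxst⟩ := hx
    obtain ⟨l₁, l₂, rfl⟩ := List.append_of_mem hxl
    have hx : x ∉ l₂ ++ l₁ := by
      have := hl.2.1
      rw [List.nodup_middle, List.nodup_cons, List.mem_append, or_comm, ← List.mem_append] at this
      exact this.1
    have hI : ∀ v ∈ l₂ ++ l₁, v ∉ s ∩ t :=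
      fun v hv hvst => hx (h.inter_subsingleton hvst hxst ▸ hv)
    have hmem : ∀ v ∈ l₁ ++ x :: l₂, v = x ∨ v ∈ l₂ ++ l₁ := by
      intro v
      simp only [List.mem_append, List.mem_cons]
      tauto
    refine (h.isChain_subset hl.isChain_rotate hI).imp (fun hs v hv => ?_) (fun ht v hv => ?_)
    · rcases hmem v hv with rfl | hv
      exacts [hxst.1, hs v hv]
    · rcases hmem v hv with rfl | hv
      exacts [hxst.2, ht v hv]
  · exact h.isChain_subset hl.isChain_adj fun v hv hvst => hx ⟨v, hv, hvst⟩

end IsSeparation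

theorem exists_isSeparation_of_not_connected [Nonempty V] (hG : ¬ G.Connected) :
    ∃ s t, IsSeparation G s t ∧ s ≠ Set.univ ∧ t ≠ Set.univ := by
  obtain ⟨a, b, hab⟩ : ∃ a b, ¬ G.Reachable a b := by
    by_contra! h
    exact hG ((connected_iff G).2 ⟨h, inferInstance⟩)
  refine ⟨{v | G.Reachable a v}, {v | G.Reachable a v}ᶜ, ⟨Set.union_compl_self _, ?_, ?_⟩,
    Set.ne_univ_iff_exists_notMem _ |>.2 ⟨b, hab⟩,
    Set.ne_univ_iff_exists_notMem _ |>.2 ⟨a, fun h => h (Reachable.refl a)⟩⟩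
  · rw [Set.inter_compl_self]
    exact Set.subsingleton_empty
  · intro u v huv
    by_cases hu : G.Reachable a u
    · exact Or.inl ⟨hu, hu.trans huv.reachable⟩
    · exact Or.inr ⟨hu, fun hv => hu (hv.trans huv.symm.reachable)⟩

theorem IsCutVertex.exists_isSeparation {x : V} (hx : IsCutVertex G x) :
    ∃ s t, IsSeparation G s t ∧ s ≠ Set.univ ∧ t ≠ Set.univ := by
  obtain ⟨a, b, -, hab⟩ := hx
  set C : Set V := {v | ∃ hv : v ≠ x, (G.induce {y | y ≠ x}).Reachable a ⟨v, hv⟩}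
  have hxC : x ∉ C := fun ⟨hx, _⟩ => hx rfl
  have hC : ∀ ⦃u v⦄, G.Adj u v → v ≠ x → u ∈ C → v ∈ C := by
    rintro u v huv hv ⟨hu, hau⟩
    exact ⟨hv, hau.trans (Adj.reachable (G := G.induce {y | y ≠ x}) huv)⟩
  refine ⟨insert x C, Cᶜ, ⟨?_, ?_, ?_⟩, ?_, ?_⟩
  · rw [Set.insert_union, Set.union_compl_self, Set.insert_eq_of_mem (Set.mem_univ x)]
  · rw [Set.insert_inter_of_mem hxC, Set.inter_compl_self, insert_empty_eq]
    exact Set.subsingleton_singleton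
  · intro u v huv
    by_cases hu : u ∈ C
    · refine Or.inl ⟨Or.inr hu, ?_⟩
      by_cases hv : v = x
      exacts [Or.inl hv, Or.inr (hC huv hv hu)]
    by_cases hv : v ∈ C
    · refine Or.inl ⟨?_, Or.inr hv⟩
      by_cases hux : u = x
      exacts [Or.inl hux, absurd (hC huv.symm hux hv) hu]
    · exact Or.inr ⟨hu, hv⟩
  · refine Set.ne_univ_iff_exists_notMem _ |>.2 ⟨b, ?_⟩
    rintro (hb | ⟨_, hab'⟩)
    exacts [b.2 hb, hab hab']
  · exact Set.ne_univ_iff_exists_notMem _ |>.2 ⟨a, fun h => h ⟨a.2, Reachable.refl _⟩⟩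

theorem exists_isSeparation_of_not_nonseparable [Nonempty V] (hG : ¬ Nonseparable G) :
    ∃ s t, IsSeparation G s t ∧ s ≠ Set.univ ∧ t ≠ Set.univ := by
  by_cases hconn : G.Connected
  · obtain ⟨x, hx⟩ : ∃ x, IsCutVertex G x := by
      by_contra! h
      exact hG ⟨hconn, h⟩
    exact hx.exists_isSeparation
  · exact exists_isSeparation_of_not_connected hconn

end Separation

theorem exists_injective_lt_iff_of_union {s t : Set V} (hst : s ∪ t = Set.univ)
    (hI : (s ∩ t).Subsingleton) {f₁ : s → ℕ} {f₂ : t → ℕ} (hf₁ : Injective f₁)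
    (hf₂ : Injective f₂) :
    ∃ f : V → ℕ, Injective f ∧ (∀ a b : s, f a < f b ↔ f₁ a < f₁ b) ∧
      ∀ a b : t, f a < f b ↔ f₂ a < f₂ b := by
  classical
  obtain ⟨c₁, c₂, hc⟩ : ∃ c₁ c₂ : ℕ, ∀ v (h₁ : v ∈ s) (h₂ : v ∈ t),
      f₁ ⟨v, h₁⟩ + c₂ = f₂ ⟨v, h₂⟩ + c₁ := by
    by_cases h : (s ∩ t).Nonempty
    · obtain ⟨x, hx₁, hx₂⟩ := h
      refine ⟨f₁ ⟨x, hx₁⟩, f₂ ⟨x, hx₂⟩, fun v h₁ h₂ => ?_⟩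
      obtain rfl := hI ⟨h₁, h₂⟩ ⟨hx₁, hx₂⟩
      exact add_comm _ _
    · exact ⟨0, 0, fun v h₁ h₂ => absurd ⟨v, h₁, h₂⟩ h⟩
  have ht : ∀ v, v ∉ s → v ∈ t := fun v hv => (Set.eq_univ_iff_forall.1 hst v).resolve_left hv
  -- `s` is sent to even numbers and `t \ s` to odd ones; the shifts make the two agree on `s ∩ t`
  let f : V → ℕ := fun v =>
    if h : v ∈ s then 2 * (f₁ ⟨v, h⟩ + c₂) else 2 * (f₂ ⟨v, ht v h⟩ + c₁) + 1
  have hfs : ∀ a (h : a ∈ s), f a = 2 * (f₁ ⟨a, h⟩ + c₂) := fun a h => dif_pos h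
  have hfns : ∀ a : V, (h : a ∉ s) → f a = 2 * (f₂ ⟨a, ht a h⟩ + c₁) + 1 := fun a h => dif_neg h
  have hft : ∀ a : t, f a = 2 * (f₂ a + c₁) ∨ f a = 2 * (f₂ a + c₁) + 1 := by
    intro a
    by_cases h : a.1 ∈ s
    · exact Or.inl ((hfs a h).trans (by rw [hc a h a.2]))
    · exact Or.inr (hfns a h)
  refine ⟨f, fun u v huv => ?_, fun a b => by simp [hfs a a.2, hfs b b.2], fun a b => ?_⟩
  · by_cases hu : u ∈ s <;> by_cases hv : v ∈ s
    · have := hfs u hu; have := hfs v hv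
      exact congrArg Subtype.val (@hf₁ ⟨u, hu⟩ ⟨v, hv⟩ (by omega))
    · have := hfs u hu; have := hfns v hv; omega
    · have := hfns u hu; have := hfs v hv; omega
    · have := hfns u hu; have := hfns v hv
      exact congrArg Subtype.val (@hf₂ ⟨u, ht u hu⟩ ⟨v, ht v hv⟩ (by omega))
  · by_cases hab : f₂ a = f₂ b
    · rw [hf₂ hab]; simp
    · rcases hft a with ha | ha <;> rcases hft b with hb | hb <;> omega

def CyclesBounded (G : SimpleGraph V) (lt : V → V → Prop) : Prop :=
  ∀ l, MonoCycle G lt l → 2 ≤ l.length →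
    ∃ B : G.Subgraph, Nonseparable B.coe ∧ l.length ≤ circAlt B.coe

theorem Nonseparable.exists_cyclesBounded [Finite V] (hG : Nonseparable G) :
    ∃ f : V → ℕ, Injective f ∧ CyclesBounded G (fun a b => f a < f b) := by
  obtain ⟨f, hf, hfG⟩ := exists_maxCycleLen_eq_circAlt G
  obtain ⟨B, hB, hBG⟩ := exists_nonseparable_subgraph_of_copy (Copy.id G) hG
  exact ⟨f, hf, fun l hl _ => ⟨B, hB, hBG ▸ hfG ▸ le_maxCycleLen hl⟩⟩

theorem CyclesBounded.bound_of_subset [Finite V] {s : Set V} {lts : s → s → Prop}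
    (h : CyclesBounded (G.induce s) lts) (hlt : ∀ a b : s, lt a b → lts a b)
    (hl : MonoCycle G lt l) (hlen : 2 ≤ l.length) (hsub : ∀ v ∈ l, v ∈ s) :
    ∃ B : G.Subgraph, Nonseparable B.coe ∧ l.length ≤ circAlt B.coe := by
  lift l to List s using hsub
  have hls : MonoCycle (G.induce s) lts l :=
    ((monoCycle_map_iff Subtype.val_injective).1 hl).mono le_rfl hlt
  obtain ⟨B₁, hB₁, hlenB₁⟩ := h l hls (by simpa using hlen)
  obtain ⟨B, hB, hBB₁⟩ :=
    exists_nonseparable_subgraph_of_copy ((Copy.induce G s).comp B₁.coeCopy) hB₁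
  exact ⟨B, hB, by simpa [hBB₁] using hlenB₁⟩

theorem IsSeparation.exists_cyclesBounded [Finite V] {s t : Set V} (hst : IsSeparation G s t)
    {f₁ : s → ℕ} {f₂ : t → ℕ} (hf₁ : Injective f₁) (hf₂ : Injective f₂)
    (h₁ : CyclesBounded (G.induce s) (fun a b => f₁ a < f₁ b))
    (h₂ : CyclesBounded (G.induce t) (fun a b => f₂ a < f₂ b)) :
    ∃ f : V → ℕ, Injective f ∧ CyclesBounded G (fun a b => f a < f b) := by
  obtain ⟨f, hf, hff₁, hff₂⟩ :=
    exists_injective_lt_iff_of_union hst.union_eq_univ hst.inter_subsingleton hf₁ hf₂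
  refine ⟨f, hf, fun l hl hlen => ?_⟩
  rcases hst.monoCycle_subset hl with hs | ht
  · exact h₁.bound_of_subset (fun a b => (hff₁ a b).1) hl hlen hs
  · exact h₂.bound_of_subset (fun a b => (hff₂ a b).1) hl hlen ht

theorem exists_injective_cyclesBounded [Finite V] (G : SimpleGraph V) :
    ∃ f : V → ℕ, Injective f ∧ CyclesBounded G (fun a b => f a < f b) := by
  induction hn : Nat.card V using Nat.strong_induction_on generalizing V with
  | _ n ih =>
  by_cases hG : Nonseparable G
  · exact hG.exists_cyclesBounded
  rcases isEmpty_or_nonempty V with hV | hV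
  · refine ⟨isEmptyElim, fun a => isEmptyElim a, fun l hl => ?_⟩
    exact absurd (List.eq_nil_of_subset_nil fun v => isEmptyElim v) hl.1
  obtain ⟨s, t, hst, hs, ht⟩ := exists_isSeparation_of_not_nonseparable hG
  have hcard : ∀ u : Set V, u ≠ Set.univ → Nat.card u < n := fun u hu => by
    obtain ⟨v, hv⟩ := Set.ne_univ_iff_exists_notMem u |>.1 hu
    exact hn ▸ Finite.card_subtype_lt hv
  obtain ⟨f₁, hf₁, h₁⟩ := ih _ (hcard s hs) (G.induce s) rfl
  obtain ⟨f₂, hf₂, h₂⟩ := ih _ (hcard t ht) (G.induce t) rfl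
  exact hst.exists_cyclesBounded hf₁ hf₂ h₁ h₂

theorem CyclesBounded.maxCycleLen_le [Finite V] [Nonempty V] (h : CyclesBounded G lt) :
    maxCycleLen G lt ≤ sSup {n | ∃ B : G.Subgraph, IsBlock B ∧ circAlt B.coe = n} := by
  have hbdd : BddAbove {n | ∃ B : G.Subgraph, IsBlock B ∧ circAlt B.coe = n} :=
    ⟨circAlt G, by rintro _ ⟨B, -, rfl⟩; exact circAlt_le_of_copy B.coeCopy⟩
  refine csSup_le' ?_
  rintro _ ⟨l, hl, rfl⟩
  rcases le_or_gt 2 l.length with hlen | hlen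
  · obtain ⟨B, hB, hlB⟩ := h l hl hlen
    obtain ⟨B', hB', hBB'⟩ := exists_isBlock_circAlt_ge hB
    exact hlB.trans (hBB'.trans (le_csSup hbdd ⟨B', hB', rfl⟩))
  · obtain ⟨B', hB', -⟩ := exists_isBlock_circAlt_ge
      (nonseparable_singletonSubgraph (G := G) (Classical.arbitrary V))
    have : Nonempty B'.verts := hB'.1.1.nonempty
    calc l.length ≤ 1 := by omega
      _ ≤ circAlt B'.coe := one_le_circAlt
      _ ≤ _ := le_csSup hbdd ⟨B', hB', rfl⟩

end

/-- The circular altitude of a finite graph equals the maximum of the circular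
altitudes of its blocks. -/
theorem circAlt_eq_sup_blocks {V : Type*} [Finite V] [Nonempty V] (G : SimpleGraph V) :
    circAlt G = sSup {n | ∃ B : G.Subgraph, IsBlock B ∧ circAlt B.coe = n} := by
  refine le_antisymm ?_ (csSup_le' ?_)
  · obtain ⟨f, hf, hbound⟩ := exists_injective_cyclesBounded G
    exact (circAlt_le hf).trans hbound.maxCycleLen_le
  · rintro _ ⟨B, -, rfl⟩
    exact circAlt_le_of_copy B.coeCopy
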